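/- Let A and B be n×n real symmetric matrices with eigenvalues λ₁(A) ≥ ... ≥ λ_n(A) and λ₁(B) ≥ ... ≥ λ_n(B). Then ∑_{k=1}^n (λ_k(A) - λ_k(B))² ≤ ‖A - B‖_F², where ‖·‖_F is the Frobenius norm. -/
import Mathlib

open Finset Matrix

lemma mirsky_ds_bound {n : ℕ} {S : Matrix (Fin n) (Fin n) ℝ}
    (hS : S ∈ doublyStochastic ℝ (Fin n))
    {x y : Fin n → ℝ} (hxy : Monovary x y) :
    ∑ i, ∑ j, S i j * (x i * y j) ≤ ∑ i, x i * y i := by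
  obtain ⟨w, hw0, hw1, hw⟩ := exists_eq_sum_perm_of_mem_doublyStochastic hS
  have hSij : ∀ i j, S i j = ∑ σ : Equiv.Perm (Fin n), w σ * (if σ i = j then 1 else 0) := by
    intro i j
    rw [← hw]
    simp [Matrix.sum_apply, Matrix.smul_apply, smul_eq_mul, Equiv.Perm.permMatrix, PEquiv.toMatrix_apply, Equiv.toPEquiv_apply, Option.mem_def,
      eq_comm, mul_ite]
  have key : ∑ i, ∑ j, S i j * (x i * y j)
      = ∑ σ : Equiv.Perm (Fin n), w σ * ∑ i, x i * y (σ i) := by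
    calc ∑ i, ∑ j, S i j * (x i * y j)
        = ∑ i, ∑ σ : Equiv.Perm (Fin n), ∑ j, w σ * (if σ i = j then x i * y j else 0) := by
          refine Finset.sum_congr rfl fun i _ => ?_
          rw [Finset.sum_comm]
          refine Finset.sum_congr rfl fun j _ => ?_
          rw [hSij i j, Finset.sum_mul]
          refine Finset.sum_congr rfl fun σ _ => ?_
          split <;> simp [mul_assoc]
      _ = ∑ σ : Equiv.Perm (Fin n), ∑ i, ∑ j, w σ * (if σ i = j then x i * y j else 0) :=
          Finset.sum_comm
      _ = ∑ σ : Equiv.Perm (Fin n), w σ * ∑ i, x i * y (σ i) := by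
          refine Finset.sum_congr rfl fun σ _ => ?_
          rw [Finset.mul_sum]
          refine Finset.sum_congr rfl fun i _ => ?_
          rw [← Finset.mul_sum]
          congr 1
          simp
  rw [key]
  calc ∑ σ : Equiv.Perm (Fin n), w σ * ∑ i, x i * y (σ i)
      ≤ ∑ σ : Equiv.Perm (Fin n), w σ * ∑ i, x i * y i := by
        refine Finset.sum_le_sum fun σ _ => mul_le_mul_of_nonneg_left ?_ (hw0 σ)
        exact hxy.sum_mul_comp_perm_le_sum_mul
    _ = ∑ i, x i * y i := by rw [← Finset.sum_mul, hw1, one_mul]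

lemma mirsky_trace_formula {n : ℕ} {A B : Matrix (Fin n) (Fin n) ℝ}
    (hA : A.IsHermitian) (hB : B.IsHermitian) :
    (A * B).trace = ∑ i, ∑ j,
      ((star (hA.eigenvectorUnitary : Matrix (Fin n) (Fin n) ℝ)
        * (hB.eigenvectorUnitary : Matrix (Fin n) (Fin n) ℝ)) i j) ^ 2
        * (hA.eigenvalues i * hB.eigenvalues j) := by
  set U := (hA.eigenvectorUnitary : Matrix (Fin n) (Fin n) ℝ)
  set V := (hB.eigenvectorUnitary : Matrix (Fin n) (Fin n) ℝ)
  set W := star U * V with hW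
  have hdA : A = U * Matrix.diagonal hA.eigenvalues * star U := by
    simpa using hA.spectral_theorem
  have hdB : B = V * Matrix.diagonal hB.eigenvalues * star V := by
    simpa using hB.spectral_theorem
  have h1 : (A * B).trace
      = (Matrix.diagonal hA.eigenvalues * W * Matrix.diagonal hB.eigenvalues * star W).trace := by
    conv_lhs => rw [hdA, hdB]
    rw [show U * Matrix.diagonal hA.eigenvalues * star U * (V * Matrix.diagonal hB.eigenvalues * star V)
        = U * (Matrix.diagonal hA.eigenvalues * (star U * V) * Matrix.diagonal hB.eigenvalues * (star V)) by
      noncomm_ring]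
    rw [Matrix.trace_mul_comm]
    congr 1
    rw [hW]
    simp only [Matrix.star_mul, star_star]
    noncomm_ring
  rw [h1, Matrix.trace]
  simp only [Matrix.diag_apply, Matrix.mul_apply, Matrix.diagonal_apply, Matrix.star_apply,
    star_trivial, Finset.sum_mul, Finset.mul_sum]
  refine Finset.sum_congr rfl fun i _ => ?_
  refine Finset.sum_congr rfl fun j _ => ?_
  simp [Finset.sum_ite_eq, Finset.mul_sum, Finset.sum_mul]
  ring

example : True := trivial

/-- Mirsky's theorem (Frobenius norm version): for real symmetric matrices A, B with
eigenvalues listed in decreasing order, ∑_k (λ_k(A) - λ_k(B))² ≤ ‖A - B‖_F². -/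
theorem stmt_13 (n : ℕ) (A B : Matrix (Fin n) (Fin n) ℝ)
    (hA : A.IsHermitian) (hB : B.IsHermitian)
    (σA σB : Equiv.Perm (Fin n))
    (hσA : Antitone (hA.eigenvalues ∘ σA)) (hσB : Antitone (hB.eigenvalues ∘ σB)) :
    ∑ k, (hA.eigenvalues (σA k) - hB.eigenvalues (σB k)) ^ 2
      ≤ ∑ i, ∑ j, (A i j - B i j) ^ 2 := by
  set U := (hA.eigenvectorUnitary : Matrix (Fin n) (Fin n) ℝ) with hU
  set V := (hB.eigenvectorUnitary : Matrix (Fin n) (Fin n) ℝ) with hV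
  set W := star U * V with hWdef
  have hWu : W ∈ Matrix.unitaryGroup (Fin n) ℝ := by
    rw [Matrix.mem_unitaryGroup_iff]
    have hVV : V * star V = 1 := Matrix.mem_unitaryGroup_iff.mp hB.eigenvectorUnitary.2
    have hUU : star U * U = 1 := Matrix.mem_unitaryGroup_iff'.mp hA.eigenvectorUnitary.2
    calc star U * V * star (star U * V) = star U * (V * star V) * U := by
          simp only [Matrix.star_mul, star_star]; noncomm_ring
      _ = 1 := by rw [hVV, mul_one, hUU]
  set d := hA.eigenvalues
  set e := hB.eigenvalues
  set x : Fin n → ℝ := d ∘ σA with hx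
  set y : Fin n → ℝ := e ∘ σB with hy
  -- the doubly stochastic matrix
  set S : Matrix (Fin n) (Fin n) ℝ := fun i j => (W (σA i) (σB j)) ^ 2 with hS
  have hSds : S ∈ doublyStochastic ℝ (Fin n) := by
    rw [mem_doublyStochastic_iff_sum]
    refine ⟨fun i j => sq_nonneg _, fun i => ?_, fun j => ?_⟩
    · have h1 : (W * star W) (σA i) (σA i) = 1 := by
        rw [Matrix.mem_unitaryGroup_iff.mp hWu, Matrix.one_apply_eq]
      rw [Matrix.mul_apply] at h1
      calc ∑ j, S i j = ∑ j, (W (σA i) j) ^ 2 := Equiv.sum_comp σB fun j => (W (σA i) j) ^ 2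
        _ = 1 := by
            rw [← h1]
            exact Finset.sum_congr rfl fun j _ => by simp [Matrix.star_apply, sq]
    · have h1 : (star W * W) (σB j) (σB j) = 1 := by
        rw [Matrix.mem_unitaryGroup_iff'.mp hWu, Matrix.one_apply_eq]
      rw [Matrix.mul_apply] at h1
      calc ∑ i, S i j = ∑ i, (W i (σB j)) ^ 2 := Equiv.sum_comp σA fun i => (W i (σB j)) ^ 2
        _ = 1 := by
            rw [← h1]
            exact Finset.sum_congr rfl fun i _ => by simp [Matrix.star_apply, sq, mul_comm]
  have hmono : Monovary x y := hσA.monovary hσB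
  -- trace(A*B) bounded
  have htrAB : (A * B).trace = ∑ i, ∑ j, S i j * (x i * y j) := by
    rw [mirsky_trace_formula hA hB]
    rw [← Equiv.sum_comp σA (fun i => ∑ j, (W i j) ^ 2 * (d i * e j))]
    refine Finset.sum_congr rfl fun i _ => ?_
    rw [← Equiv.sum_comp σB (fun j => (W (σA i) j) ^ 2 * (d (σA i) * e j))]
    rfl
  have htrbound : (A * B).trace ≤ ∑ k, x k * y k := htrAB ▸ mirsky_ds_bound hSds hmono
  -- trace(A*A) and trace(B*B)
  have htrAA : (A * A).trace = ∑ k, x k ^ 2 := by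
    rw [mirsky_trace_formula hA hA]
    have hWA : star U * U = 1 := Matrix.mem_unitaryGroup_iff'.mp hA.eigenvectorUnitary.2
    rw [show (∑ i, ∑ j, ((star U * U) i j) ^ 2 * (d i * d j)) = ∑ i, d i ^ 2 by
      rw [hWA]
      refine Finset.sum_congr rfl fun i _ => ?_
      rw [Finset.sum_eq_single i (fun j _ hj => by simp [Matrix.one_apply, (Ne.symm hj), hj])
        (by simp)]
      simp [sq]]
    exact (Equiv.sum_comp σA fun k => d k ^ 2).symm
  have htrBB : (B * B).trace = ∑ k, y k ^ 2 := by
    rw [mirsky_trace_formula hB hB]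
    have hWB : star V * V = 1 := Matrix.mem_unitaryGroup_iff'.mp hB.eigenvectorUnitary.2
    rw [show (∑ i, ∑ j, ((star V * V) i j) ^ 2 * (e i * e j)) = ∑ i, e i ^ 2 by
      rw [hWB]
      refine Finset.sum_congr rfl fun i _ => ?_
      rw [Finset.sum_eq_single i (fun j _ hj => by simp [Matrix.one_apply, (Ne.symm hj), hj])
        (by simp)]
      simp [sq]]
    exact (Equiv.sum_comp σB fun k => e k ^ 2).symm
  -- entrywise sums as traces
  have hAB : ∑ i, ∑ j, A i j * B i j = (A * B).trace := by
    rw [Matrix.trace]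
    refine Finset.sum_congr rfl fun i _ => ?_
    rw [Matrix.diag_apply, Matrix.mul_apply]
    exact Finset.sum_congr rfl fun j _ => by rw [← hB.apply i j]; simp
  have hAA : ∑ i, ∑ j, A i j ^ 2 = (A * A).trace := by
    rw [Matrix.trace]
    refine Finset.sum_congr rfl fun i _ => ?_
    rw [Matrix.diag_apply, Matrix.mul_apply]
    exact Finset.sum_congr rfl fun j _ => by rw [← hA.apply i j]; simp [sq]
  have hBB : ∑ i, ∑ j, B i j ^ 2 = (B * B).trace := by
    rw [Matrix.trace]
    refine Finset.sum_congr rfl fun i _ => ?_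
    rw [Matrix.diag_apply, Matrix.mul_apply]
    exact Finset.sum_congr rfl fun j _ => by rw [← hB.apply i j]; simp [sq]
  -- expand both sides
  have hL : ∑ k, (x k - y k) ^ 2 = ∑ k, x k ^ 2 - 2 * ∑ k, x k * y k + ∑ k, y k ^ 2 := by
    rw [Finset.mul_sum, ← Finset.sum_sub_distrib, ← Finset.sum_add_distrib]
    exact Finset.sum_congr rfl fun k _ => by ring
  have hR : ∑ i, ∑ j, (A i j - B i j) ^ 2
      = ∑ i, ∑ j, A i j ^ 2 - 2 * ∑ i, ∑ j, A i j * B i j + ∑ i, ∑ j, B i j ^ 2 := by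
    rw [Finset.mul_sum, ← Finset.sum_sub_distrib, ← Finset.sum_add_distrib]
    refine Finset.sum_congr rfl fun i _ => ?_
    rw [Finset.mul_sum, ← Finset.sum_sub_distrib, ← Finset.sum_add_distrib]
    exact Finset.sum_congr rfl fun j _ => by ring
  show ∑ k, (x k - y k) ^ 2 ≤ _
  rw [hL, hR, hAA, hBB, hAB, htrAA, htrBB]
  linarith [htrbound]
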